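/- Let m ≥ 1 and k ≥ 1. The number of strictly increasing chains A_1 ⊊ A_2 ⊊ ⋯ ⊊ A_k of subsets of an m-element set such that it is not the case that both A_1 = ∅ and A_k is the whole set equals 2·Surj(m, k) + Surj(m, k+1); equivalently it equals 2·k!·S(m,k) + (k+1)!·S(m,k+1). -/

import Mathlib

/-!
A monotone chain `A : Fin k → Finset α` is the same thing as a map `f : α → Fin (k + 1)`
recording where each element enters the chain (`k` if it never does): `A i = {x | f x ≤ i}`.
Strictness of `A` says that `f` takes every value strictly between `0` and `k`, `A 0 ≠ ∅` says
that it takes the value `0`, and `A (k - 1) ≠ univ` that it takes the value `k`. Hence the chains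
counted are the maps whose range is everything, everything but `k`, or everything but `0`, and a
map with range `{p}ᶜ` is a surjection onto `Fin k` followed by `Fin.succAbove p`.
-/

/-- The number of surjective functions from an `m`-element set onto a `k`-element set. -/
noncomputable def Surj (m k : ℕ) : ℕ := Nat.card {f : Fin m → Fin k // Function.Surjective f}

open Finset Function

namespace FinsetChain

variable {α : Type*} {k : ℕ}

def ofLevel [Fintype α] (f : α → Fin (k + 1)) (i : Fin k) : Finset α :=
  {x | f x ≤ i.castSucc}

@[simp]
theorem mem_ofLevel [Fintype α] {f : α → Fin (k + 1)} {i : Fin k} {x : α} :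
    x ∈ ofLevel f i ↔ f x ≤ i.castSucc := by
  simp [ofLevel]

theorem monotone_ofLevel [Fintype α] (f : α → Fin (k + 1)) : Monotone (ofLevel f) :=
  fun _ _ hij _ hx => mem_ofLevel.2 <| (mem_ofLevel.1 hx).trans (Fin.castSucc_le_castSucc_iff.2 hij)

def level [DecidableEq α] (A : Fin k → Finset α) (x : α) : Fin (k + 1) :=
  ⟨#{i | x ∉ A i}, Nat.lt_succ_of_le <| (card_le_univ _).trans_eq (Fintype.card_fin k)⟩

theorem level_ofLevel [Fintype α] [DecidableEq α] (f : α → Fin (k + 1)) :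
    level (ofLevel f) = f := by
  funext x
  have hfilter : #{i | x ∉ ofLevel f i} = #{i : Fin k | (i : ℕ) < f x} := by
    simp [Fin.lt_def]
  ext
  rw [level, Fin.val_mk, hfilter, Fin.card_filter_val_lt]
  exact min_eq_right (Nat.lt_succ_iff.1 (f x).isLt)

theorem mem_iff_level_le [DecidableEq α] {A : Fin k → Finset α} (hA : Monotone A) {x : α}
    {i : Fin k} : x ∈ A i ↔ level A x ≤ i.castSucc := by
  rw [Fin.le_def, Fin.val_castSucc, level, Fin.val_mk]
  constructor
  · intro hx
    have hsub : ({j | x ∉ A j} : Finset (Fin k)) ⊆ Iio i := fun j hj => by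
      simp only [mem_filter, mem_univ, true_and] at hj
      exact mem_Iio.2 (lt_of_not_ge fun hij => hj (hA hij hx))
    simpa using card_le_card hsub
  · intro hle
    by_contra hx
    have hsub : Iic i ⊆ ({j | x ∉ A j} : Finset (Fin k)) := fun j hj => by
      simp only [mem_filter, mem_univ, true_and]
      exact fun hxj => hx (hA (mem_Iic.1 hj) hxj)
    have := card_le_card hsub
    simp only [Fin.card_Iic] at this
    omega

theorem ofLevel_level [Fintype α] [DecidableEq α] {A : Fin k → Finset α} (hA : Monotone A) :
    ofLevel (level A) = A := by
  funext i
  ext x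
  rw [mem_ofLevel, mem_iff_level_le hA]

def levelEquiv [Fintype α] [DecidableEq α] :
    (α → Fin (k + 1)) ≃ {A : Fin k → Finset α // Monotone A} where
  toFun f := ⟨ofLevel f, monotone_ofLevel f⟩
  invFun A := level A.1
  left_inv := level_ofLevel
  right_inv A := Subtype.ext (ofLevel_level A.2)

theorem strictMono_ofLevel_iff [Fintype α] {f : α → Fin (k + 1)} :
    StrictMono (ofLevel f) ↔ Set.Ioo 0 (Fin.last k) ⊆ Set.range f := by
  constructor
  · rintro hf j ⟨hj0, hjk⟩
    rw [Fin.lt_def, Fin.val_zero] at hj0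
    rw [Fin.lt_def, Fin.val_last] at hjk
    have hlt : (⟨j - 1, by omega⟩ : Fin k) < ⟨j, hjk⟩ := Fin.mk_lt_mk.2 (by omega)
    obtain ⟨x, hx, hx'⟩ := exists_of_ssubset (hf hlt)
    simp only [mem_ofLevel, Fin.le_def, Fin.val_castSucc] at hx hx'
    exact ⟨x, Fin.ext (by omega)⟩
  · intro h i i' hii'
    have hi_lt : i.succ < Fin.last k := Fin.lt_def.2 (by rw [Fin.val_succ, Fin.val_last]; omega)
    obtain ⟨x, hx⟩ := h ⟨Fin.succ_pos i, hi_lt⟩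
    refine (monotone_ofLevel f hii'.le).lt_of_not_ge fun hle => ?_
    have hx_big : x ∈ ofLevel f i' :=
      mem_ofLevel.2 (hx.trans_le (Fin.succ_le_castSucc_iff.2 hii'))
    have hx_small := mem_ofLevel.1 (hle hx_big)
    rw [hx] at hx_small
    exact Fin.castSucc_lt_succ.not_ge hx_small

theorem ofLevel_zero_eq_empty_iff [Fintype α] {f : α → Fin (k + 1)} (hk : 0 < k) :
    ofLevel f ⟨0, hk⟩ = ∅ ↔ 0 ∉ Set.range f := by
  simp only [eq_empty_iff_forall_notMem, mem_ofLevel, Fin.le_def, Fin.val_castSucc, Set.mem_range,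
    not_exists, Fin.ext_iff, Fin.val_zero]
  exact forall_congr' fun x => by omega

theorem ofLevel_last_eq_univ_iff [Fintype α] {f : α → Fin (k + 1)} (hk : 0 < k) :
    ofLevel f ⟨k - 1, Nat.sub_lt hk one_pos⟩ = univ ↔ Fin.last k ∉ Set.range f := by
  simp only [eq_univ_iff_forall, mem_ofLevel, Fin.le_def, Fin.val_castSucc, Set.mem_range,
    not_exists, Fin.ext_iff, Fin.val_last]
  exact forall_congr' fun x => by have := (f x).isLt; omega

end FinsetChain

theorem Fin.Ioo_subset_and_mem_or_iff {k : ℕ} (hk : 0 < k) {R : Set (Fin (k + 1))} :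
    Set.Ioo 0 (Fin.last k) ⊆ R ∧ (0 ∈ R ∨ Fin.last k ∈ R) ↔
      R = Set.univ ∨ R = {Fin.last k}ᶜ ∨ R = {0}ᶜ := by
  have hcover : ∀ j : Fin (k + 1), j = 0 ∨ j = Fin.last k ∨ j ∈ Set.Ioo 0 (Fin.last k) := by
    intro j
    simp only [Set.mem_Ioo, Fin.ext_iff, Fin.lt_def, Fin.val_zero, Fin.val_last]
    omega
  have hne : (0 : Fin (k + 1)) ≠ Fin.last k := by simp [Fin.ext_iff]; omega
  constructor
  · rintro ⟨hmid, hend⟩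
    by_cases h0 : 0 ∈ R <;> by_cases hl : Fin.last k ∈ R
    · left
      exact Set.eq_univ_of_forall fun j => by
        rcases hcover j with rfl | rfl | hj <;> [exact h0; exact hl; exact hmid hj]
    · right; left
      ext j
      rcases hcover j with rfl | rfl | hj
      · simp [h0, hne]
      · simp [hl]
      · simp [hmid hj, hj.2.ne]
    · right; right
      ext j
      rcases hcover j with rfl | rfl | hj
      · simp [h0]
      · simp [hl, hne.symm]
      · simp [hmid hj, hj.1.ne']
    · tauto
  · rintro (rfl | rfl | rfl)
    · simp
    · exact ⟨fun j hj => hj.2.ne, Or.inl hne⟩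
    · exact ⟨fun j hj => hj.1.ne', Or.inr hne.symm⟩

theorem Nat.card_range_eq_range_emb {α β γ : Type*} (e : β ↪ γ) :
    Nat.card {f : α → γ // Set.range f = Set.range e} =
      Nat.card {g : α → β // Surjective g} := by
  have hcomp (g : {g : α → β // Surjective g}) : Set.range (e ∘ g.1) = Set.range e := by
    rw [Set.range_comp, g.2.range_eq, Set.image_univ]
  refine (Nat.card_congr (Equiv.ofBijective (fun g => ⟨e ∘ g.1, hcomp g⟩) ⟨?_, ?_⟩)).symm
  · intro g g' h
    exact Subtype.ext (e.injective.comp_left (congrArg Subtype.val h))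
  · rintro ⟨f, hf⟩
    obtain ⟨g, rfl⟩ := Set.range_subset_range_iff_exists_comp.1 hf.le
    have hg : Set.range g = Set.univ :=
      Set.image_injective.2 e.injective (by rwa [Set.image_univ, ← Set.range_comp])
    exact ⟨⟨g, Set.range_eq_univ.1 hg⟩, rfl⟩

theorem Fin.card_range_eq_compl_singleton {α : Type*} {k : ℕ} (p : Fin (k + 1)) :
    Nat.card {f : α → Fin (k + 1) // Set.range f = {p}ᶜ} =
      Nat.card {g : α → Fin k // Surjective g} := by
  rw [← Fin.range_succAbove p, ← Nat.card_range_eq_range_emb (Fin.succAboveEmb p)]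
  rfl

theorem Nat.card_subtype_or_of_disjoint {α : Type*} [Finite α] {p q : α → Prop}
    (h : ∀ a, p a → ¬q a) :
    Nat.card {a // p a ∨ q a} = Nat.card {a // p a} + Nat.card {a // q a} := by
  classical
  rw [Nat.card_congr (subtypeOrEquiv p q fun r hp hq a hr => h a (hp a hr) (hq a hr)), Nat.card_sum]

open FinsetChain in
/-- For `m ≥ 1` and `k ≥ 1`, the number of strictly increasing chains
`A₁ ⊊ A₂ ⊊ ⋯ ⊊ A_k` of subsets of an `m`-element set such that it is not the case that both
`A₁ = ∅` and `A_k` is the whole set, equals `2·Surj(m, k) + Surj(m, k+1)`. -/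
theorem chains_not_both_extreme (m k : ℕ) (hk : 1 ≤ k) :
    Nat.card {A : Fin k → Finset (Fin m) //
        StrictMono A ∧ ¬(A ⟨0, hk⟩ = ∅ ∧ A ⟨k - 1, by omega⟩ = Finset.univ)}
      = 2 * Surj m k + Surj m (k + 1) := by
  have hlevel (f : Fin m → Fin (k + 1)) :
      (Set.range f = Set.univ ∨ Set.range f = {Fin.last k}ᶜ ∨ Set.range f = {0}ᶜ) ↔
        StrictMono (ofLevel f) ∧
          ¬(ofLevel f ⟨0, hk⟩ = ∅ ∧ ofLevel f ⟨k - 1, by omega⟩ = univ) := by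
    rw [strictMono_ofLevel_iff, ofLevel_zero_eq_empty_iff hk, ofLevel_last_eq_univ_iff hk,
      not_and_or, not_not, not_not, Fin.Ioo_subset_and_mem_or_iff hk]
  rw [← Nat.card_congr ((levelEquiv.subtypeEquiv hlevel).trans
      (Equiv.subtypeSubtypeEquivSubtype fun h => h.1.monotone))]
  have hcompl_ne : ({Fin.last k}ᶜ : Set (Fin (k + 1))) ≠ {0}ᶜ := by
    simp [Fin.ext_iff]
    omega
  rw [Nat.card_subtype_or_of_disjoint fun f hf => by simp [hf, Set.ext_iff],
    Nat.card_subtype_or_of_disjoint fun f hf => hf ▸ hcompl_ne,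
    Fin.card_range_eq_compl_singleton, Fin.card_range_eq_compl_singleton]
  simp only [Set.range_eq_univ, Surj]
  ring
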